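/- arXiv:2412.13622 — 2 statements merged into one kernel-verified Lean document; each statement's English description precedes it below -/
import Mathlib

section
/- For every instance I, if a subset S* ⊆ S with |S*| ≤ q satisfies non-wastefulness, maximal diversity, balanced representation, and justified envy-freeness, then S* = Ch*(I); that is, the greedy choice function is the unique choice function satisfying these four properties. -/
open Classical

/-- An instance `I = (S, q, ≻, T, τ, η)`: a finite set of students with a strict
total order (priority, modeled by a linear order where `s' < s` means `s ≻ s'`),
a positive capacity `q`, a finite set of types `T`, a type assignment `τ`, and
ranked quotas `η t j` for ranks `j ∈ {1,…,r}`. -/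
structure Inst where
  S : Type
  T : Type
  [fS : Fintype S]
  [dS : DecidableEq S]
  [lS : LinearOrder S]
  [fT : Fintype T]
  [dT : DecidableEq T]
  q : ℕ
  qpos : 0 < q
  r : ℕ
  τ : S → Finset T
  η : T → ℕ → ℕ

attribute [instance] Inst.fS Inst.dS Inst.lS Inst.fT Inst.dT

/-- `s ≻ s'` : student `s` has strictly higher priority than `s'`. -/
def Inst.prio (I : Inst) (s s' : I.S) : Prop := s' < s

/-- A (potential) reserved seat: a type (`none` = the general type `t₀`),
a rank, and an index. -/
abbrev SeatT (I : Inst) := Option I.T × ℕ × ℕ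

/-- The rank of a seat. -/
def seatRank (I : Inst) (v : SeatT I) : ℕ := v.2.1

/-- The type of a seat (`none` = general type `t₀`). -/
def seatType (I : Inst) (v : SeatT I) : Option I.T := v.1

/-- Seats actually present in the ranked reservation graph: for each type `t`, rank
`1 ≤ j ≤ r` and index `i < η t j` a seat, and `q` general seats of rank `r`. -/
def SeatValid (I : Inst) (v : SeatT I) : Prop :=
  match v.1 with
  | some t => 1 ≤ v.2.1 ∧ v.2.1 ≤ I.r ∧ v.2.2 < I.η t v.2.1
  | none => v.2.1 = I.r ∧ v.2.2 < I.q

/-- There is an edge between student `s` and a seat of type `t` iff `t ∈ τ s` or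
`t` is the general type `t₀`. -/
def EdgeOK (I : Inst) (s : I.S) (v : SeatT I) : Prop :=
  match v.1 with
  | some t => t ∈ I.τ s
  | none => True

/-- A matching in the ranked reservation graph: a set of edges of `G` in which
every student and every seat appears at most once. -/
def IsMatching (I : Inst) (M : Finset (I.S × SeatT I)) : Prop :=
  (∀ e ∈ M, SeatValid I e.2 ∧ EdgeOK I e.1 e.2) ∧
  (∀ e ∈ M, ∀ e' ∈ M, e.1 = e'.1 → e = e') ∧
  (∀ e ∈ M, ∀ e' ∈ M, e.2 = e'.2 → e = e')

/-- `S_M`: the set of students covered by the matching `M`. -/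
def covered (I : Inst) (M : Finset (I.S × SeatT I)) : Finset I.S := M.image Prod.fst

/-- `x_i`: the number of edges of rank `i` in `M` (the `i`-th entry of the
signature `ρ(M)`). -/
def sig (I : Inst) (M : Finset (I.S × SeatT I)) (i : ℕ) : ℕ :=
  (M.filter (fun e => seatRank I e.2 = i)).card

/-- `ρ(M) <lex ρ(M')` : the signature of `M'` is lexicographically strictly
better than that of `M`. -/
def SigLT (I : Inst) (M M' : Finset (I.S × SeatT I)) : Prop :=
  ∃ k, 1 ≤ k ∧ k ≤ I.r ∧ (∀ i, 1 ≤ i → i < k → sig I M i = sig I M' i) ∧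
    sig I M k < sig I M' k

/-- A matching of size at most `q` is rank-maximal if its signature is
lexicographically ≥ that of every matching of size at most `q`. -/
def RankMaximal (I : Inst) (M : Finset (I.S × SeatT I)) : Prop :=
  IsMatching I M ∧ M.card ≤ I.q ∧
    ∀ M', IsMatching I M' → M'.card ≤ I.q → ¬ SigLT I M M'

/-- `U`: the set of groups (type combinations actually occurring among students). -/
def groups (I : Inst) : Finset (Finset I.T) := Finset.univ.image I.τ

/-- `S_u`: the set of students of group `u`. -/
def Su (I : Inst) (u : Finset I.T) : Finset I.S :=
  Finset.univ.filter (fun s => I.τ s = u)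

/-- `|M_u|`: the number of students of group `u` covered by `M`. -/
def Mu (I : Inst) (M : Finset (I.S × SeatT I)) (u : Finset I.T) : ℕ :=
  ((covered I M).filter (fun s => I.τ s = u)).card

/-- `min_{u ∈ U} |M_u| / |S_u|` (as `WithTop ℚ`; it is `⊤` iff `U = ∅`). -/
noncomputable def minRatio (I : Inst) (M : Finset (I.S × SeatT I)) : WithTop ℚ :=
  ((groups I).image (fun u => ((Mu I M u : ℚ) / ((Su I u).card : ℚ)))).min

/-- `M` attains balanced representation: `M` is rank-maximal of size at most `q`
and maximizes `min_{u∈U} |M_u|/|S_u|` over all such matchings. -/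
def BalancedRep (I : Inst) (M : Finset (I.S × SeatT I)) : Prop :=
  RankMaximal I M ∧ ∀ M', RankMaximal I M' → minRatio I M' ≤ minRatio I M

/-- The greedy choice function `Ch*`: process the students in decreasing order of
priority, adding the current student `s` whenever some matching of size at most `q`
that is rank-maximal and attains balanced representation covers `S* ∪ {s}`. -/
noncomputable def ChStar (I : Inst) : Finset I.S :=
  ((Finset.sort (Finset.univ : Finset I.S) (· ≤ ·)).reverse).foldl
    (fun A s =>
      if ∃ M, BalancedRep I M ∧ insert s A ⊆ covered I M then insert s A else A) ∅

/-- Non-wastefulness of a chosen set: `|S*| = min (|S|, q)`. -/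
def NonWasteful (I : Inst) (A : Finset I.S) : Prop :=
  A.card = min (Fintype.card I.S) I.q

/-- Maximal diversity of a chosen set: some rank-maximal matching of size at most
`q` covers only students of `S*`. -/
def MaxDiversity (I : Inst) (A : Finset I.S) : Prop :=
  ∃ M, RankMaximal I M ∧ covered I M ⊆ A

/-- Balanced representation of a chosen set: some matching in `𝕄` attaining
balanced representation covers all of `S*`. -/
def BalancedRepSet (I : Inst) (A : Finset I.S) : Prop :=
  ∃ M, BalancedRep I M ∧ A ⊆ covered I M

/-- Justified envy-freeness: no `s ∉ S*`, `s' ∈ S*` with `s ≻ s'` such that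
`(S* ∪ {s}) \ {s'}` satisfies both maximal diversity and balanced representation. -/
def JEF (I : Inst) (A : Finset I.S) : Prop :=
  ¬ ∃ s s', s ∉ A ∧ s' ∈ A ∧ I.prio s s' ∧
    MaxDiversity I (insert s A \ {s'}) ∧ BalancedRepSet I (insert s A \ {s'})

/-- `I` is valid w.r.t. a target vector `δ`: some rank-maximal matching of size at
most `q` has `|M_u| ≥ δ_u` for every group `u ∈ U`. -/
def ValidWrt (I : Inst) (δ : Finset I.T → ℕ) : Prop :=
  ∃ M, RankMaximal I M ∧ ∀ u ∈ groups I, δ u ≤ Mu I M u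

/-- The max-min ratio `α(I)`: the maximum over rank-maximal matchings `M` of
size at most `q` of `min_{u∈U} |M_u|/|S_u|`. -/
noncomputable def alphaQ (I : Inst) : ℚ :=
  let cands : Finset ℚ :=
    ((Finset.Icc 0 (Fintype.card I.S)) ×ˢ groups I).image
      (fun p => (p.1 : ℚ) / ((Su I p.2).card : ℚ))
  ((cands.filter
      (fun x : ℚ => ∃ M, RankMaximal I M ∧ minRatio I M = (x : WithTop ℚ))).max).unbotD 0

/-- The crucial vector `δ*` : `δ*_u = ⌊α(I)·|S_u|⌋`. -/
noncomputable def deltaStar (I : Inst) (u : Finset I.T) : ℕ :=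
  ⌊alphaQ I * ((Su I u).card : ℚ)⌋₊

/-- The `k` highest-priority students of `A`. -/
def topK (I : Inst) (A : Finset I.S) (k : ℕ) : Finset I.S :=
  A.filter (fun s => (A.filter (fun s' => s ≤ s')).card ≤ k)

/-! ### The flow network -/

/-- Nodes of the flow network: `Sum.inl 0` = source `a`, `Sum.inl 1` = sink `b`,
`Sum.inl 2` = the capacity node `Q`; group nodes, type nodes (`none` = `t₀`),
and rank nodes `t^i` (rank value `i+1` for `i : Fin r`). -/
abbrev Node (I : Inst) := Fin 3 ⊕ Finset I.T ⊕ Option I.T ⊕ (Option I.T × Fin I.r)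

def nSrc (I : Inst) : Node I := Sum.inl 0
def nSink (I : Inst) : Node I := Sum.inl 1
def nQ (I : Inst) : Node I := Sum.inl 2
def nGrp (I : Inst) (u : Finset I.T) : Node I := Sum.inr (Sum.inl u)
def nTyp (I : Inst) (t : Option I.T) : Node I := Sum.inr (Sum.inr (Sum.inl t))
def nRnk (I : Inst) (t : Option I.T) (i : Fin I.r) : Node I :=
  Sum.inr (Sum.inr (Sum.inr (t, i)))

/-- Quotas including the general type: `η_{t₀}^r = q` and `η_{t₀}^j = 0` for `j < r`. -/
def ηgen (I : Inst) (t : Option I.T) (j : ℕ) : ℕ :=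
  match t with
  | some t => I.η t j
  | none => if j = I.r then I.q else 0

/-- Capacities of the flow network (capacity `0` = no edge). -/
def cap (I : Inst) : Node I → Node I → ℕ := fun x y =>
  match x, y with
  | Sum.inl a, Sum.inl b => if a = 2 ∧ b = 1 then I.q else 0
  | Sum.inl a, Sum.inr (Sum.inl u) => if a = 0 then (Su I u).card else 0
  | Sum.inr (Sum.inl u), Sum.inr (Sum.inr (Sum.inl (some t))) =>
      ((Su I u).filter (fun s => t ∈ I.τ s)).card
  | Sum.inr (Sum.inl u), Sum.inr (Sum.inr (Sum.inl none)) => (Su I u).card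
  | Sum.inr (Sum.inr (Sum.inl t)), Sum.inr (Sum.inr (Sum.inr (t', i))) =>
      if t = t' then ηgen I t' ((i : ℕ) + 1) else 0
  | Sum.inr (Sum.inr (Sum.inr (t, i))), Sum.inl a =>
      if a = 2 then ηgen I t ((i : ℕ) + 1) else 0
  | _, _ => 0

/-- Costs of the flow network: the edge `t → t^i` has cost equal to the rank
`i+1`; all other edges have cost `0`. -/
def cost (I : Inst) : Node I → Node I → ℕ := fun x y =>
  match x, y with
  | Sum.inr (Sum.inr (Sum.inl t)), Sum.inr (Sum.inr (Sum.inr (t', i))) =>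
      if t = t' then (i : ℕ) + 1 else 0
  | _, _ => 0

/-- A flow: nonnegative, within capacities, and conserved at every node other
than the source and the sink. -/
def IsFlow (I : Inst) (f : Node I → Node I → ℝ) : Prop :=
  (∀ x y, 0 ≤ f x y) ∧ (∀ x y, f x y ≤ (cap I x y : ℝ)) ∧
  (∀ x : Node I, x ≠ nSrc I → x ≠ nSink I → (∑ y, f y x) = ∑ y, f x y)

/-- The value of a flow: `Σ_u f(a, u)`. -/
noncomputable def flowVal (I : Inst) (f : Node I → Node I → ℝ) : ℝ :=
  ∑ u : Finset I.T, f (nSrc I) (nGrp I u)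

/-- The cost of a flow: `Σ_e cost(e) · f(e)`. -/
noncomputable def flowCost (I : Inst) (f : Node I → Node I → ℝ) : ℝ :=
  ∑ x : Node I, ∑ y : Node I, (cost I x y : ℝ) * f x y

/-- A maximum flow. -/
def IsMaxFlow (I : Inst) (f : Node I → Node I → ℝ) : Prop :=
  IsFlow I f ∧ ∀ g, IsFlow I g → flowVal I g ≤ flowVal I f

/-- A minimum-cost maximum flow. -/
def IsMinCostMaxFlow (I : Inst) (f : Node I → Node I → ℝ) : Prop :=
  IsMaxFlow I f ∧ ∀ g, IsMaxFlow I g → flowCost I f ≤ flowCost I g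

/-- The flow `f_M` induced by a matching `M`. -/
noncomputable def inducedFlow (I : Inst) (M : Finset (I.S × SeatT I)) :
    Node I → Node I → ℝ := fun x y =>
  match x, y with
  | Sum.inl a, Sum.inl b => if a = 2 ∧ b = 1 then (M.card : ℝ) else 0
  | Sum.inl a, Sum.inr (Sum.inl u) => if a = 0 then (Mu I M u : ℝ) else 0
  | Sum.inr (Sum.inl u), Sum.inr (Sum.inr (Sum.inl t)) =>
      ((M.filter (fun e => I.τ e.1 = u ∧ seatType I e.2 = t)).card : ℝ)
  | Sum.inr (Sum.inr (Sum.inl t)), Sum.inr (Sum.inr (Sum.inr (t', i))) =>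
      if t = t' then
        ((M.filter (fun e => seatType I e.2 = t ∧ seatRank I e.2 = (i : ℕ) + 1)).card : ℝ)
      else 0
  | Sum.inr (Sum.inr (Sum.inr (t, i))), Sum.inl a =>
      if a = 2 then
        ((M.filter (fun e => seatType I e.2 = t ∧ seatRank I e.2 = (i : ℕ) + 1)).card : ℝ)
      else 0
  | _, _ => 0

/-! ### Alternating and augmenting paths -/

/-- The edge set of a path encoded by its list of students `a₀,…` and list of
seats `v₀,…` (edges `(aₖ, vₖ)` and `(aₖ₊₁, vₖ)`). -/
def edgesOf (I : Inst) (students : List I.S) (seats : List (SeatT I)) :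
    Finset (I.S × SeatT I) :=
  (students.zip seats).toFinset ∪ (students.tail.zip seats).toFinset

/-- Symmetric difference `M ⊕ P = (M \ P) ∪ (P \ M)`. -/
def symmDiffM (I : Inst) (M P : Finset (I.S × SeatT I)) : Finset (I.S × SeatT I) :=
  (M \ P) ∪ (P \ M)

/-- An alternating path w.r.t. `M` from an uncovered student to a covered student:
students `a₀, …, aₙ` and seats `v₀, …, vₙ₋₁`, with `(aₖ, vₖ) ∉ M` edges of `G`
and `(aₖ₊₁, vₖ) ∈ M`. -/
structure AltPath (I : Inst) (M : Finset (I.S × SeatT I)) where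
  students : List I.S
  seats : List (SeatT I)
  len : students.length = seats.length + 1
  nodupS : students.Nodup
  nodupV : seats.Nodup
  notM : ∀ e ∈ students.zip seats, e ∉ M ∧ SeatValid I e.2 ∧ EdgeOK I e.1 e.2
  inM : ∀ e ∈ students.tail.zip seats, e ∈ M

/-- The edge set of an alternating path. -/
def AltPath.edges {I : Inst} {M : Finset (I.S × SeatT I)} (P : AltPath I M) :
    Finset (I.S × SeatT I) :=
  edgesOf I P.students P.seats

/-- An augmenting path w.r.t. `M` from an uncovered student to an uncovered seat:
students `a₀, …, aₙ` and seats `v₀, …, vₙ`, with `(aₖ, vₖ) ∉ M` edges of `G`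
and `(aₖ₊₁, vₖ) ∈ M`. -/
structure AugPath (I : Inst) (M : Finset (I.S × SeatT I)) where
  students : List I.S
  seats : List (SeatT I)
  len : students.length = seats.length
  nodupS : students.Nodup
  nodupV : seats.Nodup
  notM : ∀ e ∈ students.zip seats, e ∉ M ∧ SeatValid I e.2 ∧ EdgeOK I e.1 e.2
  inM : ∀ e ∈ students.tail.zip seats, e ∈ M

/-- The edge set of an augmenting path. -/
def AugPath.edges {I : Inst} {M : Finset (I.S × SeatT I)} (P : AugPath I M) :
    Finset (I.S × SeatT I) :=
  edgesOf I P.students P.seats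

/-- The instance obtained from `I` by restricting the student set to `X`. -/
@[reducible] def restrict (I : Inst) (X : Finset I.S) : Inst :=
  { S := {s : I.S // s ∈ X}
    T := I.T
    fS := inferInstance
    dS := inferInstance
    lS := inferInstance
    fT := I.fT
    dT := I.dT
    q := I.q
    qpos := I.qpos
    r := I.r
    τ := fun s => I.τ s.1
    η := I.η }

/-!
The greedy procedure returns `A` provided every `s ∉ A` is rejected at its turn, i.e. no
balanced rank-maximal matching covers `s` together with the members of `A` of higher priority.
Suppose `M` does. By non-wastefulness a balanced matching `M_A` covering `A` covers exactly `A`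
and has size `q`; `M` can be enlarged to size `q` as well, so both have the same signature.
Among matchings of a fixed signature the group-count vectors have the exchange property of
alternating paths: one unit of representation can be moved from a group `u'` that `M`
represents less than `M_A` does to the group of `s`, keeping the matching balanced. As `M`
covers the members of `A` above `s`, the group `u'` contains a member `s'` of `A` below `s`.
Swapping students of equal groups realises these counts with cover set exactly
`(A ∪ {s}) \ {s'}`, a justified envy of `s` towards `s'`.
-/

open Finset

lemma Finset.card_filter_insert_of_notMem {α : Type*} [DecidableEq α] {s : Finset α} {a : α}
    (p : α → Prop) [DecidablePred p] (ha : a ∉ s) :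
    ((insert a s).filter p).card = (s.filter p).card + if p a then 1 else 0 := by
  rw [filter_insert]
  split_ifs
  · exact card_insert_of_notMem fun h => ha (mem_filter.1 h).1
  · rfl

lemma Finset.exists_mem_sdiff_of_card_filter_le {α : Type*} [DecidableEq α] {X Y : Finset α}
    (p : α → Prop) [DecidablePred p] {b : α} (hbX : b ∈ X) (hbY : b ∉ Y) (hb : p b)
    (h : (X.filter p).card ≤ (Y.filter p).card) : ∃ a ∈ Y, a ∉ X ∧ p a := by
  by_contra! hcon
  have hsub : Y.filter p ⊆ X.filter p := fun a ha => by
    obtain ⟨haY, hpa⟩ := mem_filter.1 ha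
    exact mem_filter.2 ⟨by_contra fun haX => hcon a haY haX hpa, hpa⟩
  have hne : ∃ x ∈ X.filter p, x ∉ Y.filter p :=
    ⟨b, mem_filter.2 ⟨hbX, hb⟩, fun h => hbY (mem_filter.1 h).1⟩
  exact absurd h (not_le.2 (card_lt_card ((ssubset_iff_of_subset hsub).2 hne)))

lemma foldr_ite_insert_eq_filter {α : Type*} [LinearOrder α] [DecidableEq α]
    (p : Finset α → α → Prop) (A : Finset α) (L : List α) (hL : L.Pairwise (· < ·))
    (hp : ∀ s ∈ L, p (A.filter fun x => x ∈ L ∧ s < x) s ↔ s ∈ A) :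
    L.foldr (fun s B => if p B s then insert s B else B) ∅ = A.filter (· ∈ L) := by
  induction L with
  | nil => simp
  | cons s L ih =>
    rw [List.pairwise_cons] at hL
    have habove : ∀ t, s ≤ t →
        (A.filter fun x => x ∈ s :: L ∧ t < x) = A.filter fun x => x ∈ L ∧ t < x := by
      intro t hst
      ext x
      simp only [mem_filter, List.mem_cons]
      constructor
      · rintro ⟨hxA, rfl | hx, htx⟩
        · exact absurd htx (not_lt.2 hst)
        · exact ⟨hxA, hx, htx⟩
      · exact fun ⟨hxA, hx, htx⟩ => ⟨hxA, Or.inr hx, htx⟩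
    have htail : (A.filter fun x => x ∈ L ∧ s < x) = A.filter (· ∈ L) := by
      ext x
      simp only [mem_filter]
      exact ⟨fun h => ⟨h.1, h.2.1⟩, fun h => ⟨h.1, h.2, hL.1 x h.2⟩⟩
    rw [List.foldr_cons, ih hL.2 fun t ht => by
      rw [← habove t (hL.1 t ht).le]; exact hp t (List.mem_cons_of_mem s ht)]
    have hs := hp s List.mem_cons_self
    rw [habove s le_rfl, htail] at hs
    ext x
    split_ifs with h <;> simp only [mem_insert, mem_filter, List.mem_cons] <;> aesop

def groupCount (I : Inst) (X : Finset I.S) (u : Finset I.T) : ℕ :=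
  (X.filter fun s => I.τ s = u).card

section Matchings

variable {I : Inst} {M N : Finset (I.S × SeatT I)}

lemma mem_covered {x : I.S} : x ∈ covered I M ↔ ∃ v, (x, v) ∈ M := by
  simp [covered]

lemma covered_mono (h : M ⊆ N) : covered I M ⊆ covered I N :=
  image_subset_image h

lemma Mu_eq_groupCount (u : Finset I.T) : Mu I M u = groupCount I (covered I M) u := rfl

lemma groupCount_mono {X Y : Finset I.S} (h : X ⊆ Y) (u : Finset I.T) :
    groupCount I X u ≤ groupCount I Y u :=
  card_le_card (filter_subset_filter _ h)

lemma groupCount_insert {X : Finset I.S} {b : I.S} (hb : b ∉ X) (u : Finset I.T) :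
    groupCount I (insert b X) u = groupCount I X u + if I.τ b = u then 1 else 0 :=
  card_filter_insert_of_notMem _ hb

lemma groupCount_insert_erase {X : Finset I.S} {a b : I.S} (ha : a ∈ X) (hb : b ∉ X)
    (u : Finset I.T) :
    groupCount I (insert b (X.erase a)) u + (if I.τ a = u then 1 else 0) =
      groupCount I X u + if I.τ b = u then 1 else 0 := by
  conv_rhs => rw [← insert_erase ha, groupCount_insert (notMem_erase a X)]
  rw [groupCount_insert fun h => hb (mem_of_mem_erase h)]
  omega

lemma card_eq_of_groupCount_eq {X Y : Finset I.S}
    (h : ∀ u, groupCount I X u = groupCount I Y u) : X.card = Y.card := by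
  rw [card_eq_sum_card_fiberwise (f := I.τ) (t := univ) fun _ _ => mem_univ _,
    card_eq_sum_card_fiberwise (s := Y) (f := I.τ) (t := univ) fun _ _ => mem_univ _]
  exact sum_congr rfl fun u _ => h u

lemma EdgeOK.of_τ_eq {a b : I.S} {w : SeatT I} (h : EdgeOK I a w) (hab : I.τ a = I.τ b) :
    EdgeOK I b w := by
  unfold EdgeOK at *
  split <;> simp_all

lemma IsMatching.card_covered (hM : IsMatching I M) : (covered I M).card = M.card :=
  card_image_of_injOn fun e he e' he' h => hM.2.1 e he e' he' h

lemma IsMatching.mono (hM : IsMatching I M) (h : N ⊆ M) : IsMatching I N :=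
  ⟨fun e he => hM.1 e (h he), fun e he e' he' => hM.2.1 e (h he) e' (h he'),
    fun e he e' he' => hM.2.2 e (h he) e' (h he')⟩

lemma IsMatching.insert_edge (hM : IsMatching I M) {x : I.S} {w : SeatT I}
    (hx : x ∉ covered I M) (hw : ∀ e ∈ M, e.2 ≠ w) (hvalid : SeatValid I w)
    (hedge : EdgeOK I x w) : IsMatching I (insert (x, w) M) := by
  have hx' : ∀ e ∈ M, e.1 ≠ x := fun e he h => hx (mem_covered.2 ⟨e.2, h ▸ he⟩)
  refine ⟨fun e he => ?_, fun e he e' he' h => ?_, fun e he e' he' h => ?_⟩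
  · rcases mem_insert.1 he with rfl | he
    exacts [⟨hvalid, hedge⟩, hM.1 e he]
  · rcases mem_insert.1 he with rfl | he <;> rcases mem_insert.1 he' with rfl | he'
    exacts [rfl, absurd h.symm (hx' e' he'), absurd h (hx' e he), hM.2.1 e he e' he' h]
  · rcases mem_insert.1 he with rfl | he <;> rcases mem_insert.1 he' with rfl | he'
    exacts [rfl, absurd h.symm (hw e' he'), absurd h (hw e he), hM.2.2 e he e' he' h]

lemma sig_insert {e : I.S × SeatT I} (he : e ∉ M) (i : ℕ) :
    sig I (insert e M) i = sig I M i + if seatRank I e.2 = i then 1 else 0 :=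
  card_filter_insert_of_notMem _ he

lemma IsMatching.exists_insert_general_seat (hM : IsMatching I M) (hq : M.card < I.q)
    (hS : M.card < Fintype.card I.S) :
    ∃ e ∉ M, seatRank I e.2 = I.r ∧ IsMatching I (insert e M) := by
  obtain ⟨x, -, hx⟩ := exists_mem_notMem_of_card_lt_card
    (s := covered I M) (t := univ) (by rwa [hM.card_covered, card_univ])
  obtain ⟨i, hi, hfree⟩ := exists_mem_notMem_of_card_lt_card
    (s := M.image fun e => e.2.2.2) (t := range I.q)
    (by rw [card_range]; exact card_image_le.trans_lt hq)
  have hw : ∀ e ∈ M, e.2 ≠ (none, I.r, i) := fun e he h =>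
    hfree (mem_image.2 ⟨e, he, by rw [h]⟩)
  exact ⟨(x, none, I.r, i), fun h => hw _ h rfl, rfl,
    hM.insert_edge hx hw ⟨rfl, mem_range.1 hi⟩ trivial⟩

end Matchings

section Swap

variable {I : Inst} {M : Finset (I.S × SeatT I)} {a b : I.S} {v w : SeatT I}

lemma IsMatching.swap (hM : IsMatching I M) (hb : b ∉ covered I M)
    (hvalid : SeatValid I w) (hedge : EdgeOK I b w) (hfree : ∀ e ∈ M, e.2 = w → e = (a, v)) :
    IsMatching I (insert (b, w) (M.erase (a, v))) :=
  (hM.mono (erase_subset _ _)).insert_edge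
    (fun h => hb (covered_mono (erase_subset _ _) h))
    (fun e he hew => ne_of_mem_erase he (hfree e (mem_of_mem_erase he) hew)) hvalid hedge

lemma notMem_erase_of_notMem_covered (hb : b ∉ covered I M) : (b, w) ∉ M.erase (a, v) :=
  fun h => hb (mem_covered.2 ⟨w, mem_of_mem_erase h⟩)

lemma card_swap (hav : (a, v) ∈ M) (hb : b ∉ covered I M) :
    (insert (b, w) (M.erase (a, v))).card = M.card := by
  rw [card_insert_of_notMem (notMem_erase_of_notMem_covered hb), card_erase_add_one hav]

lemma sig_swap (hav : (a, v) ∈ M) (hb : b ∉ covered I M) (hr : seatRank I w = seatRank I v) :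
    sig I (insert (b, w) (M.erase (a, v))) = sig I M := by
  funext i
  conv_rhs => rw [← insert_erase hav, sig_insert (notMem_erase _ _)]
  rw [sig_insert (notMem_erase_of_notMem_covered hb), hr]

lemma IsMatching.covered_erase (hM : IsMatching I M) (hav : (a, v) ∈ M) :
    covered I (M.erase (a, v)) = (covered I M).erase a := by
  ext x
  simp only [mem_erase, mem_covered]
  constructor
  · rintro ⟨u, hne, hxu⟩
    exact ⟨fun hxa => hne (hM.2.1 _ hxu _ hav hxa), u, hxu⟩
  · rintro ⟨hxa, u, hxu⟩
    exact ⟨u, fun h => hxa (congrArg Prod.fst h), hxu⟩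

lemma covered_swap (hM : IsMatching I M) (hav : (a, v) ∈ M) :
    covered I (insert (b, w) (M.erase (a, v))) = insert b ((covered I M).erase a) := by
  rw [covered, image_insert, ← covered, hM.covered_erase hav]

end Swap

section RankMaximal

variable {I : Inst} {M N : Finset (I.S × SeatT I)}

lemma SeatValid.rank_le {v : SeatT I} (hv : SeatValid I v) : seatRank I v ≤ I.r := by
  rcases v with ⟨_ | t, j, i⟩ <;> simp only [SeatValid, seatRank] at * <;> omega

lemma SeatValid.rank_pos {v : SeatT I} (hv : SeatValid I v) (hr : 0 < I.r) :
    0 < seatRank I v := by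
  rcases v with ⟨_ | t, j, i⟩ <;> simp only [SeatValid, seatRank] at * <;> omega

lemma sig_eq_zero (hM : IsMatching I M) {i : ℕ} (hi : i = 0 ∧ 0 < I.r ∨ I.r < i) :
    sig I M i = 0 :=
  card_eq_zero.2 <| filter_eq_empty_iff.2 fun e he hei => by
    have hle := (hM.1 e he).1.rank_le
    rcases hi with ⟨rfl, hr⟩ | hi
    · exact absurd hei ((hM.1 e he).1.rank_pos hr).ne'
    · omega

lemma sig_zero_of_r_eq_zero (hM : IsMatching I M) (hr : I.r = 0) : sig I M 0 = M.card :=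
  congrArg card <| filter_true_of_mem fun e he => by
    have := (hM.1 e he).1.rank_le
    omega

lemma sig_eq_of_not_sigLT (hMN : ¬ SigLT I M N) (hNM : ¬ SigLT I N M) {i : ℕ} (hi : 1 ≤ i)
    (hir : i ≤ I.r) : sig I M i = sig I N i := by
  induction i using Nat.strong_induction_on with
  | _ i ih =>
    have hprefix : ∀ j, 1 ≤ j → j < i → sig I M j = sig I N j :=
      fun j hj hji => ih j hji hj (by omega)
    rcases lt_trichotomy (sig I M i) (sig I N i) with hlt | heq | hgt
    · exact absurd ⟨i, hi, hir, hprefix, hlt⟩ hMN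
    · exact heq
    · exact absurd ⟨i, hi, hir, fun j hj hji => (hprefix j hj hji).symm, hgt⟩ hNM

lemma RankMaximal.sig_eq (hM : RankMaximal I M) (hN : RankMaximal I N) (hc : M.card = N.card) :
    sig I M = sig I N := by
  funext i
  by_cases hi : 1 ≤ i ∧ i ≤ I.r
  · exact sig_eq_of_not_sigLT (hM.2.2 N hN.1 hN.2.1) (hN.2.2 M hM.1 hM.2.1) hi.1 hi.2
  by_cases h0 : i = 0 ∧ I.r = 0
  · rw [h0.1, sig_zero_of_r_eq_zero hM.1 h0.2, sig_zero_of_r_eq_zero hN.1 h0.2, hc]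
  · rw [sig_eq_zero hM.1 (by omega), sig_eq_zero hN.1 (by omega)]

lemma RankMaximal.of_sig_eq (hN : RankMaximal I N) (hM : IsMatching I M) (hc : M.card = N.card)
    (hs : sig I M = sig I N) : RankMaximal I M := by
  refine ⟨hM, hc ▸ hN.2.1, fun M' hM' hq hlt => hN.2.2 M' hM' hq ?_⟩
  unfold SigLT at hlt ⊢
  rwa [hs] at hlt

end RankMaximal

section BalancedRep

variable {I : Inst} {M N : Finset (I.S × SeatT I)}

lemma le_minRatio {x : WithTop ℚ}
    (h : ∀ u ∈ groups I, x ≤ (((Mu I N u : ℚ) / (Su I u).card : ℚ) : WithTop ℚ)) :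
    x ≤ minRatio I N :=
  Finset.le_min fun _ hb => by
    obtain ⟨u, hu, rfl⟩ := mem_image.1 hb
    exact h u hu

lemma minRatio_le_of_Mu_le {u : Finset I.T} (hu : u ∈ groups I) (h : Mu I M u ≤ Mu I N u) :
    minRatio I M ≤ (((Mu I N u : ℚ) / (Su I u).card : ℚ) : WithTop ℚ) :=
  (Finset.min_le (mem_image.2 ⟨u, hu, rfl⟩)).trans (WithTop.coe_le_coe.2 (by gcongr))

lemma minRatio_mono (h : ∀ u, Mu I M u ≤ Mu I N u) : minRatio I M ≤ minRatio I N :=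
  le_minRatio fun u hu => minRatio_le_of_Mu_le hu (h u)

lemma BalancedRep.minRatio_eq (hM : BalancedRep I M) (hN : BalancedRep I N) :
    minRatio I M = minRatio I N :=
  le_antisymm (hN.2 M hM.1) (hM.2 N hN.1)

lemma BalancedRep.of_minRatio_le (hN : BalancedRep I N) (hM : RankMaximal I M)
    (h : minRatio I N ≤ minRatio I M) : BalancedRep I M :=
  ⟨hM, fun M' hM' => (hN.2 M' hM').trans h⟩

-- For `r ≥ 1` a free general seat would improve the signature at rank `r`; for `r = 0` it is
-- harmless, every matching being rank-maximal.
lemma BalancedRep.exists_card_eq_q (hS : I.q ≤ Fintype.card I.S) (hM : BalancedRep I M) :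
    ∃ M', BalancedRep I M' ∧ M'.card = I.q ∧ covered I M ⊆ covered I M' := by
  obtain ⟨d, hd⟩ : ∃ d, I.q - M.card = d := ⟨_, rfl⟩
  induction d generalizing M with
  | zero => exact ⟨M, hM, by have := hM.1.2.1; omega, subset_rfl⟩
  | succ d ih =>
    obtain ⟨e, heM, hrank, hM'⟩ :=
      hM.1.1.exists_insert_general_seat (by omega) (by omega)
    have hsig := sig_insert (I := I) heM
    rcases Nat.eq_zero_or_pos I.r with hr | hr
    · have hRM : RankMaximal I (insert e M) :=
        ⟨hM', by rw [card_insert_of_notMem heM]; omega,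
          fun _ _ _ ⟨k, hk, hkr, _⟩ => by omega⟩
      have hcov := covered_mono (I := I) (subset_insert e M)
      obtain ⟨M', hBR, hcard, hsub⟩ :=
        ih (hM.of_minRatio_le hRM (minRatio_mono fun u => groupCount_mono hcov u))
          (by rw [card_insert_of_notMem heM]; omega)
      exact ⟨M', hBR, hcard, hcov.trans hsub⟩
    · refine absurd ⟨I.r, hr, le_rfl, fun j _ hj => ?_, ?_⟩
        (hM.1.2.2 _ hM' (by rw [card_insert_of_notMem heM]; omega))
      · rw [hsig, hrank, if_neg hj.ne']; rfl
      · rw [hsig, hrank, if_pos rfl]; omega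

end BalancedRep

section Exchange

variable {I : Inst} {M N : Finset (I.S × SeatT I)}

lemma IsMatching.exists_covered_eq (hN : IsMatching I N) {X : Finset I.S}
    (hX : ∀ u, groupCount I X u = Mu I N u) :
    ∃ N', IsMatching I N' ∧ N'.card = N.card ∧ sig I N' = sig I N ∧ covered I N' = X := by
  obtain ⟨n, hn⟩ : ∃ n, (X \ covered I N).card = n := ⟨_, rfl⟩
  induction n generalizing N with
  | zero =>
    have hsub : X ⊆ covered I N := fun x hx => by
      by_contra hxN
      exact absurd hn (card_ne_zero_of_mem (mem_sdiff.2 ⟨hx, hxN⟩))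
    exact ⟨N, hN, rfl, rfl,
      (eq_of_subset_of_card_le hsub (card_eq_of_groupCount_eq hX).ge).symm⟩
  | succ n ih =>
    obtain ⟨b, hb⟩ := card_pos.1 (by omega : 0 < (X \ covered I N).card)
    obtain ⟨hbX, hbN⟩ := mem_sdiff.1 hb
    obtain ⟨a, haN, haX, hab⟩ := exists_mem_sdiff_of_card_filter_le (fun x => I.τ x = I.τ b)
      hbX hbN rfl (hX (I.τ b)).le
    obtain ⟨v, hav⟩ := mem_covered.1 haN
    have hcov := covered_swap (b := b) (w := v) hN hav
    have hcount : ∀ u, groupCount I X u = Mu I (insert (b, v) (N.erase (a, v))) u := fun u => by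
      have h := groupCount_insert_erase haN hbN u
      rw [hab, add_left_inj] at h
      rw [Mu_eq_groupCount, hcov, h, hX, Mu_eq_groupCount]
    have hdiff : X \ covered I (insert (b, v) (N.erase (a, v))) = (X \ covered I N).erase b := by
      ext x
      simp only [hcov, mem_sdiff, mem_insert, mem_erase]
      constructor
      · rintro ⟨hxX, hx⟩
        exact ⟨fun h => hx (Or.inl h), hxX,
          fun h => hx (Or.inr ⟨fun h' => haX (h' ▸ hxX), h⟩)⟩
      · rintro ⟨hxb, hxX, hxN⟩
        exact ⟨hxX, fun h => h.elim hxb fun h' => hxN h'.2⟩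
    obtain ⟨N', hN', hcard, hsig, hcovN'⟩ := ih
      (hN.swap hbN (hN.1 _ hav).1 ((hN.1 _ hav).2.of_τ_eq hab)
        fun e he hev => hN.2.2 e he _ hav hev)
      hcount (by rw [hdiff, card_erase_of_mem hb, hn]; rfl)
    exact ⟨N', hN', hcard.trans (card_swap hav hbN), hsig.trans (sig_swap hav hbN rfl), hcovN'⟩

lemma BalancedRep.exists_covered_eq (hN : BalancedRep I N) {X : Finset I.S}
    (hX : ∀ u, groupCount I X u = Mu I N u) : ∃ N', BalancedRep I N' ∧ covered I N' = X := by
  obtain ⟨N', hN', hcard, hsig, hcov⟩ := hN.1.1.exists_covered_eq hX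
  refine ⟨N', hN.of_minRatio_le (hN.1.of_sig_eq hN' hcard hsig) (minRatio_mono fun u => ?_),
    hcov⟩
  rw [Mu_eq_groupCount (M := N'), hcov, hX]

lemma IsMatching.exists_swap_toward (hM : IsMatching I M) (hN : IsMatching I N)
    (hsig : sig I M = sig I N) {s : I.S} (hsM : s ∈ covered I M) (hsN : s ∉ covered I N) :
    ∃ a ∈ covered I N, ∃ N', IsMatching I N' ∧ N'.card = N.card ∧ sig I N' = sig I N ∧
      covered I N' = insert s ((covered I N).erase a) ∧ (M \ N').card < (M \ N).card := by
  obtain ⟨v, hsv⟩ := mem_covered.1 hsM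
  have hsvN : (s, v) ∉ N := fun h => hsN (mem_covered.2 ⟨v, h⟩)
  obtain ⟨⟨a, w⟩, hawN, hawM, hrank, hfree⟩ : ∃ e ∈ N, e ∉ M ∧
      seatRank I e.2 = seatRank I v ∧ ∀ e' ∈ N, e'.2 = v → e' = e := by
    by_cases hv : ∃ e ∈ N, e.2 = v
    · obtain ⟨e, heN, hev⟩ := hv
      refine ⟨e, heN, fun heM => hsvN ?_, by rw [hev],
        fun e' he' h => hN.2.2 _ he' _ heN (h.trans hev.symm)⟩
      rwa [← hM.2.2 _ heM _ hsv hev]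
    · push Not at hv
      obtain ⟨e, heN, heM, hrank⟩ := exists_mem_sdiff_of_card_filter_le
        (fun e : I.S × SeatT I => seatRank I e.2 = seatRank I v) hsv hsvN rfl (congrFun hsig _).le
      exact ⟨e, heN, heM, hrank, fun e' he' h => absurd h (hv e' he')⟩
  refine ⟨a, mem_covered.2 ⟨w, hawN⟩, _, hN.swap hsN (hM.1 _ hsv).1 (hM.1 _ hsv).2 hfree,
    card_swap hawN hsN, sig_swap hawN hsN hrank.symm, covered_swap hN hawN,
    (card_le_card fun e he => ?_).trans_lt (card_erase_lt_of_mem (mem_sdiff.2 ⟨hsv, hsvN⟩))⟩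
  obtain ⟨heM, heN'⟩ := mem_sdiff.1 he
  refine mem_erase.2
    ⟨fun h => heN' (h ▸ mem_insert_self _ _), mem_sdiff.2 ⟨heM, fun heN => ?_⟩⟩
  exact heN' (mem_insert_of_mem (mem_erase.2 ⟨fun h => hawM (h ▸ heM), heN⟩))

-- An alternating-path argument: each swap moves the deficit to the group of the displaced student.
lemma IsMatching.exists_exchange (hM : IsMatching I M) (hN : IsMatching I N)
    (hsig : sig I M = sig I N) {u₀ : Finset I.T} (hu₀ : Mu I N u₀ < Mu I M u₀) :
    ∃ u', Mu I M u' < Mu I N u' ∧ ∃ N', IsMatching I N' ∧ N'.card = N.card ∧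
      sig I N' = sig I N ∧
      ∀ u, Mu I N' u + (if u' = u then 1 else 0) = Mu I N u + (if u₀ = u then 1 else 0) := by
  obtain ⟨n, hn⟩ : ∃ n, (M \ N).card = n := ⟨_, rfl⟩
  induction n using Nat.strong_induction_on generalizing N u₀ with
  | _ n ih =>
    obtain ⟨s, hsM', hsN'⟩ := exists_mem_notMem_of_card_lt_card hu₀
    obtain ⟨hsM, hsu⟩ := mem_filter.1 hsM'
    have hsN : s ∉ covered I N := fun h => hsN' (mem_filter.2 ⟨h, hsu⟩)
    obtain ⟨a, ha, N₁, hN₁, hcard, hsig₁, hcov, hlt⟩ :=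
      hM.exists_swap_toward hN hsig hsM hsN
    have hshift : ∀ u, Mu I N₁ u + (if I.τ a = u then 1 else 0) =
        Mu I N u + (if u₀ = u then 1 else 0) := fun u => by
      rw [Mu_eq_groupCount, hcov, groupCount_insert_erase ha hsN, hsu]; rfl
    generalize I.τ a = u₁ at hshift
    by_cases hdone : Mu I M u₁ < Mu I N u₁
    · exact ⟨u₁, hdone, N₁, hN₁, hcard, hsig₁, hshift⟩
    have hpivot : Mu I N₁ u₁ < Mu I M u₁ := by
      have := hshift u₁
      rw [if_pos rfl] at this
      split_ifs at this <;> subst_vars <;> omega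
    obtain ⟨u', hu', N₂, hN₂, hcard₂, hsig₂, hshift₂⟩ :=
      ih _ (hn ▸ hlt) hN₁ (hsig.trans hsig₁.symm) hpivot rfl
    refine ⟨u', ?_, N₂, hN₂, hcard₂.trans hcard, hsig₂.trans hsig₁, fun u => ?_⟩
    · have h₁ := hshift u'
      have h₀ := hshift u₀
      split_ifs at h₁ h₀ <;> subst_vars <;> omega
    · have := hshift u
      have := hshift₂ u
      omega

lemma BalancedRep.exists_shift (hM : BalancedRep I M) (hN : BalancedRep I N)
    (hc : M.card = N.card) (u₀ : Finset I.T) :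
    ∃ u', Mu I M u' < Mu I N u' + (if u₀ = u' then 1 else 0) ∧ ∃ N', BalancedRep I N' ∧
      ∀ u, Mu I N' u + (if u' = u then 1 else 0) = Mu I N u + (if u₀ = u then 1 else 0) := by
  by_cases h : Mu I N u₀ < Mu I M u₀
  · obtain ⟨u', hu', N', hN', hc', hs', hshift⟩ :=
      hM.1.1.exists_exchange hN.1.1 (hM.1.sig_eq hN.1 hc) h
    have hne : u₀ ≠ u' := by rintro rfl; omega
    refine ⟨u', by rw [if_neg hne]; omega, N', hN.of_minRatio_le (hN.1.of_sig_eq hN' hc' hs')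
      (le_minRatio fun u hu => ?_), hshift⟩
    have := hshift u
    by_cases hu' : u' = u
    · subst hu'
      rw [← hM.minRatio_eq hN]
      exact minRatio_le_of_Mu_le hu (by rw [if_pos rfl, if_neg hne] at this; omega)
    · exact minRatio_le_of_Mu_le hu (by rw [if_neg hu'] at this; split_ifs at this <;> omega)
  · exact ⟨u₀, by rw [if_pos rfl]; omega, N, hN, fun u => rfl⟩

end Exchange

lemma chStar_eq_of_forall_iff {I : Inst} {A : Finset I.S}
    (h : ∀ s, (∃ M, BalancedRep I M ∧ insert s (A.filter (s < ·)) ⊆ covered I M) ↔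
      s ∈ A) :
    ChStar I = A := by
  unfold ChStar
  rw [List.foldl_reverse]
  have := foldr_ite_insert_eq_filter
    (fun B s => ∃ M, BalancedRep I M ∧ insert s B ⊆ covered I M) A (sort univ (· ≤ ·))
    (sortedLT_sort _).pairwise fun s _ => by simpa [mem_sort] using h s
  simpa [mem_sort] using this

section Uniqueness

variable {I : Inst} {A : Finset I.S} {s : I.S}

lemma not_JEF_of_groupCount_eq {s' : I.S} {N : Finset (I.S × SeatT I)} (hs : s ∉ A)
    (hs' : s' ∈ A) (hlt : s' < s) (hN : BalancedRep I N)
    (hcount : ∀ u, groupCount I (insert s (A.erase s')) u = Mu I N u) : ¬ JEF I A := by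
  obtain ⟨N', hN', hcov⟩ := hN.exists_covered_eq hcount
  have hB : insert s A \ {s'} = covered I N' := by
    rw [hcov, sdiff_singleton_eq_erase, erase_insert_of_ne hlt.ne']
  exact fun hJ => hJ ⟨s, s', hs, hs', hlt, ⟨N', hN'.1, hB.ge⟩, ⟨N', hN', hB.le⟩⟩

lemma not_exists_balancedRep_cover (hA : BalancedRepSet I A) (hJ : JEF I A)
    (hq : A.card = I.q) (hs : s ∉ A) :
    ¬ ∃ M, BalancedRep I M ∧ insert s (A.filter (s < ·)) ⊆ covered I M := by
  rintro ⟨M₀, hM₀, hcover₀⟩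
  obtain ⟨MA, hMA, hAMA⟩ := hA
  have hcovA : covered I MA = A := (eq_of_subset_of_card_le hAMA
    (by rw [hMA.1.1.card_covered, hq]; exact hMA.1.2.1)).symm
  have hqS : I.q ≤ Fintype.card I.S := by
    have := card_le_univ (insert s A)
    rw [card_insert_of_notMem hs] at this
    omega
  obtain ⟨M, hM, hMq, hMcov⟩ := hM₀.exists_card_eq_q hqS
  obtain ⟨u', hu', N, hN, hshift⟩ := hM.exists_shift hMA
    (by rw [hMq, ← hMA.1.1.card_covered, hcovA, hq]) (I.τ s)
  have hfit :
      groupCount I (A.filter (s < ·)) u' + (if I.τ s = u' then 1 else 0) ≤ Mu I M u' := by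
    rw [← groupCount_insert fun h => lt_irrefl s (mem_filter.1 h).2]
    exact groupCount_mono (hcover₀.trans hMcov) u'
  rw [Mu_eq_groupCount (M := MA), hcovA] at hu'
  obtain ⟨s', hs'A', hs's⟩ := exists_mem_notMem_of_card_lt_card
    (s := (A.filter (s < ·)).filter fun x => I.τ x = u') (t := A.filter fun x => I.τ x = u')
    (by change groupCount I _ u' < groupCount I A u'; omega)
  obtain ⟨hs'A, hs'u⟩ := mem_filter.1 hs'A'
  have hlt : s' < s := lt_of_le_of_ne
    (not_lt.1 fun h => hs's (mem_filter.2 ⟨mem_filter.2 ⟨hs'A, h⟩, hs'u⟩))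
    (fun h => hs (h ▸ hs'A))
  refine not_JEF_of_groupCount_eq hs hs'A hlt hN (fun u => ?_) hJ
  have h₁ := groupCount_insert_erase hs'A hs u
  have h₂ := hshift u
  rw [hs'u] at h₁
  rw [Mu_eq_groupCount (M := MA), hcovA] at h₂
  omega

end Uniqueness

theorem chStar_unique_general (I : Inst) (A : Finset I.S) (h1 : NonWasteful I A)
    (h3 : BalancedRepSet I A) (h4 : JEF I A) :
    A = ChStar I := by
  refine (chStar_eq_of_forall_iff fun s => ⟨fun hcover => ?_, fun hs => ?_⟩).symm
  · by_contra hs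
    rcases le_total (Fintype.card I.S) I.q with hS | hS
    · rw [NonWasteful, min_eq_left hS] at h1
      exact hs ((card_eq_iff_eq_univ A).1 h1 ▸ mem_univ s)
    · rw [NonWasteful, min_eq_right hS] at h1
      exact not_exists_balancedRep_cover h3 h4 h1 hs hcover
  · obtain ⟨M, hM, hAM⟩ := h3
    exact ⟨M, hM, (insert_subset hs (filter_subset _ _)).trans hAM⟩

/-- any subset `S* ⊆ S` with `|S*| ≤ q` satisfying non-wastefulness,
maximal diversity, balanced representation and justified envy-freeness equals
`Ch*(I)`; i.e. `Ch*` is the unique choice function with these four properties. -/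
theorem chStar_unique (I : Inst) (A : Finset I.S) (hq : A.card ≤ I.q)
    (h1 : NonWasteful I A) (h2 : MaxDiversity I A)
    (h3 : BalancedRepSet I A) (h4 : JEF I A) :
    A = ChStar I :=
  chStar_unique_general I A h1 h3 h4
end

section
/- Let M be a matching in the ranked reservation graph G, let s be a student not covered by M, and let P be an alternating path with respect to M that starts at s and ends at a student s' covered by M (the edges of P lie alternately outside and inside M, beginning with an edge not in M and ending with an edge of M). Then M ⊕ P := (M \ P) ∪ (P \ M) is a matching in G with |M ⊕ P| = |M|, ρ(M ⊕ P) = ρ(M), and the set of students covered by M ⊕ P equals (S_M ∪ {s}) \ {s'}. In particular, if M is rank-maximal of size at most q, so is M ⊕ P. -/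
open Classical

/-!
Flipping trades the matched edges `(aₖ₊₁, vₖ)` of the path for its free edges `(aₖ, vₖ)`. Both
families run through exactly the seats `vₖ`, so the size and every rank count are unchanged, and
on the student side `a₀ = s` comes in while `aₙ = s'` goes out. The free edges cannot clash with
the edges of `M` that survive: every vertex they touch is either `s`, which `M` leaves uncovered,
or an endpoint of a removed matched edge.
-/

open Finset

theorem Finset.symmDiff_union_of_subset_of_disjoint {α : Type*} [DecidableEq α]
    {M A B : Finset α} (hB : B ⊆ M) (hA : Disjoint A M) :
    symmDiff M (A ∪ B) = M \ B ∪ A := by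
  ext e
  have hBe := @hB e
  have hAe : e ∈ A → e ∉ M := fun h => disjoint_left.1 hA h
  simp only [symmDiff_def, sup_eq_union, mem_union, mem_sdiff]
  tauto

theorem Finset.card_filter_sdiff_union {α : Type*} [DecidableEq α] {M A B : Finset α}
    (p : α → Prop) [DecidablePred p] (hB : B ⊆ M) (hA : Disjoint A M)
    (h : (A.filter p).card = (B.filter p).card) :
    ((M \ B ∪ A).filter p).card = (M.filter p).card := by
  have hsplit : (M.filter p).card = ((M \ B).filter p).card + (B.filter p).card := by
    rw [← card_union_of_disjoint
      (disjoint_sdiff_self_left.mono (filter_subset _ _) (filter_subset _ _)),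
      ← filter_union, sdiff_union_of_subset hB]
  rw [filter_union, card_union_of_disjoint
    ((hA.symm.mono_left sdiff_subset).mono (filter_subset _ _) (filter_subset _ _)), hsplit, h]

theorem Finset.card_filter_comp_eq_of_image_eq {α β : Type*} [DecidableEq β] {f : α → β}
    {A B : Finset α} (hA : Set.InjOn f A) (hB : Set.InjOn f B) (h : A.image f = B.image f)
    (q : β → Prop) [DecidablePred q] :
    (A.filter (fun a => q (f a))).card = (B.filter (fun a => q (f a))).card := by
  rw [← card_image_of_injOn (hA.mono (coe_subset.2 (filter_subset _ _))), ← filter_image, h,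
    filter_image, card_image_of_injOn (hB.mono (coe_subset.2 (filter_subset _ _)))]

theorem Finset.injOn_union_of_disjoint_image {α β : Type*} [DecidableEq α] [DecidableEq β]
    {f : α → β} {X A : Finset α} (hX : Set.InjOn f X) (hA : Set.InjOn f A)
    (h : Disjoint (X.image f) (A.image f)) : Set.InjOn f ↑(X ∪ A) := by
  have hXA : Disjoint (X : Set α) A := disjoint_coe.2 <| disjoint_left.2 fun _ hx hxA =>
    disjoint_left.1 h (mem_image_of_mem f hx) (mem_image_of_mem f hxA)
  rw [coe_union, Set.injOn_union hXA]
  exact ⟨hX, hA, fun x hx y hy hxy =>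
    disjoint_left.1 h (mem_image_of_mem f hx) (hxy ▸ mem_image_of_mem f hy)⟩

theorem Finset.sdiff_union_eq_insert_sdiff {α : Type*} [DecidableEq α] {C T D : Finset α}
    {a b : α} (ha : a ∉ C) (hT : T ⊆ C) (hb : b ∉ D) (h : insert a T = insert b D) :
    C \ T ∪ D = insert a C \ {b} := by
  ext x
  have hx := Finset.ext_iff.1 h x
  have hTx := @hT x
  simp only [mem_insert, mem_union, mem_sdiff, mem_singleton] at hx ⊢
  by_cases hxb : x = b
  · subst hxb
    rcases hx.2 (Or.inl rfl) with rfl | hxT <;> tauto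
  · tauto

theorem List.zip_eq_zip_dropLast {α β : Type*} {l₁ : List α} {l₂ : List β}
    (h : l₁.length = l₂.length + 1) : l₁.zip l₂ = l₁.dropLast.zip l₂ := by
  rw [zip_eq_zip_take_min, dropLast_eq_take, h]
  simp

theorem List.image_fst_toFinset_zip {α β : Type*} [DecidableEq α] [DecidableEq β]
    {l₁ : List α} {l₂ : List β} (h : l₁.length = l₂.length) :
    (l₁.zip l₂).toFinset.image Prod.fst = l₁.toFinset := by
  conv_rhs => rw [← map_fst_zip h.le]
  ext; simp

theorem List.image_snd_toFinset_zip {α β : Type*} [DecidableEq α] [DecidableEq β]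
    {l₁ : List α} {l₂ : List β} (h : l₁.length = l₂.length) :
    (l₁.zip l₂).toFinset.image Prod.snd = l₂.toFinset := by
  conv_rhs => rw [← map_snd_zip h.ge]
  ext; simp

theorem List.injOn_fst_zip {α β : Type*} {l₁ : List α} {l₂ : List β} (hl : l₁.Nodup)
    (h : l₁.length = l₂.length) : Set.InjOn Prod.fst {e | e ∈ l₁.zip l₂} :=
  fun _ hx _ hy => inj_on_of_nodup_map (by rwa [map_fst_zip h.le]) hx hy

theorem List.injOn_snd_zip {α β : Type*} {l₁ : List α} {l₂ : List β} (hl : l₂.Nodup)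
    (h : l₁.length = l₂.length) : Set.InjOn Prod.snd {e | e ∈ l₁.zip l₂} :=
  fun _ hx _ hy => inj_on_of_nodup_map (by rwa [map_snd_zip h.ge]) hx hy

theorem List.insert_toFinset_tail {α : Type*} [DecidableEq α] {l : List α} {a : α}
    (h : l.head? = some a) : insert a l.tail.toFinset = l.toFinset := by
  obtain ⟨t, rfl⟩ := head?_eq_some_iff.1 h
  simp

theorem List.insert_toFinset_dropLast {α : Type*} [DecidableEq α] {l : List α} {a : α}
    (h : l.getLast? = some a) : insert a l.dropLast.toFinset = l.toFinset := by
  obtain ⟨d, rfl⟩ := getLast?_eq_some_iff.1 h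
  ext; simp

theorem List.Nodup.getLast_notMem_dropLast {α : Type*} {l : List α} {a : α} (hl : l.Nodup)
    (h : l.getLast? = some a) : a ∉ l.dropLast := by
  obtain ⟨d, rfl⟩ := getLast?_eq_some_iff.1 h
  rw [dropLast_concat]
  exact fun ha => (nodup_append.1 hl).2.2 a ha a (mem_singleton_self a) rfl

theorem IsMatching.injOn_fst {I : Inst} {M : Finset (I.S × SeatT I)} (hM : IsMatching I M) :
    Set.InjOn Prod.fst (M : Set (I.S × SeatT I)) :=
  hM.2.1

theorem IsMatching.injOn_snd {I : Inst} {M : Finset (I.S × SeatT I)} (hM : IsMatching I M) :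
    Set.InjOn Prod.snd (M : Set (I.S × SeatT I)) :=
  hM.2.2

theorem RankMaximal.of_sig_eq_s11 {I : Inst} {M M' : Finset (I.S × SeatT I)} (h : RankMaximal I M)
    (hM' : IsMatching I M') (hcard : M'.card = M.card) (hsig : ∀ i, sig I M' i = sig I M i) :
    RankMaximal I M' := by
  have hsig' : sig I M' = sig I M := funext hsig
  refine ⟨hM', hcard ▸ h.2.1, fun N hN hNq => ?_⟩
  unfold SigLT
  rw [hsig']
  exact h.2.2 N hN hNq

namespace AltPath

variable {I : Inst} {M : Finset (I.S × SeatT I)} (P : AltPath I M)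

def freeEdges : Finset (I.S × SeatT I) := (P.students.zip P.seats).toFinset

def matchedEdges : Finset (I.S × SeatT I) := (P.students.tail.zip P.seats).toFinset

def flip : Finset (I.S × SeatT I) := M \ P.matchedEdges ∪ P.freeEdges

theorem matchedEdges_subset : P.matchedEdges ⊆ M :=
  fun e he => P.inM e (List.mem_toFinset.1 he)

theorem disjoint_freeEdges : Disjoint P.freeEdges M :=
  disjoint_left.2 fun e he => (P.notM e (List.mem_toFinset.1 he)).1

theorem symmDiffM_edges : symmDiffM I M P.edges = P.flip :=
  symmDiff_union_of_subset_of_disjoint P.matchedEdges_subset P.disjoint_freeEdges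

theorem length_tail : P.students.tail.length = P.seats.length := by
  simp [P.len]

theorem length_dropLast : P.students.dropLast.length = P.seats.length := by
  simp [P.len]

theorem freeEdges_eq_dropLast : P.freeEdges = (P.students.dropLast.zip P.seats).toFinset := by
  rw [freeEdges, List.zip_eq_zip_dropLast P.len]

theorem image_fst_freeEdges : P.freeEdges.image Prod.fst = P.students.dropLast.toFinset := by
  rw [freeEdges_eq_dropLast, List.image_fst_toFinset_zip P.length_dropLast]

theorem image_fst_matchedEdges : P.matchedEdges.image Prod.fst = P.students.tail.toFinset :=
  List.image_fst_toFinset_zip P.length_tail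

theorem image_snd_freeEdges : P.freeEdges.image Prod.snd = P.seats.toFinset := by
  rw [freeEdges_eq_dropLast, List.image_snd_toFinset_zip P.length_dropLast]

theorem image_snd_matchedEdges : P.matchedEdges.image Prod.snd = P.seats.toFinset :=
  List.image_snd_toFinset_zip P.length_tail

theorem injOn_fst_freeEdges : Set.InjOn Prod.fst (P.freeEdges : Set (I.S × SeatT I)) := by
  rw [freeEdges_eq_dropLast]
  simpa using List.injOn_fst_zip (P.nodupS.sublist (List.dropLast_sublist _)) P.length_dropLast

theorem injOn_snd_freeEdges : Set.InjOn Prod.snd (P.freeEdges : Set (I.S × SeatT I)) := by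
  rw [freeEdges_eq_dropLast]
  simpa using List.injOn_snd_zip P.nodupV P.length_dropLast

theorem injOn_snd_matchedEdges : Set.InjOn Prod.snd (P.matchedEdges : Set (I.S × SeatT I)) := by
  simpa [matchedEdges] using List.injOn_snd_zip P.nodupV P.length_tail

theorem card_filter_flip (p : SeatT I → Prop) [DecidablePred p] :
    (P.flip.filter (fun e => p e.2)).card = (M.filter (fun e => p e.2)).card :=
  card_filter_sdiff_union _ P.matchedEdges_subset P.disjoint_freeEdges <|
    card_filter_comp_eq_of_image_eq P.injOn_snd_freeEdges P.injOn_snd_matchedEdges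
      (by rw [image_snd_freeEdges, image_snd_matchedEdges]) p

theorem card_flip : P.flip.card = M.card := by
  simpa using P.card_filter_flip (fun _ => True)

theorem sig_flip (i : ℕ) : sig I P.flip i = sig I M i :=
  P.card_filter_flip (fun v => seatRank I v = i)

theorem image_fst_sdiff_matchedEdges (hM : IsMatching I M) :
    (M \ P.matchedEdges).image Prod.fst = covered I M \ P.students.tail.toFinset := by
  rw [image_sdiff_of_injOn hM.injOn_fst P.matchedEdges_subset, image_fst_matchedEdges, covered]

theorem isMatching_flip (hM : IsMatching I M) {s : I.S} (hhead : P.students.head? = some s)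
    (hs : s ∉ covered I M) : IsMatching I P.flip := by
  have hdropLast : P.students.dropLast.toFinset ⊆ insert s P.students.tail.toFinset := by
    rw [List.insert_toFinset_tail hhead]
    exact fun x hx =>
      List.mem_toFinset.2 ((List.dropLast_sublist _).subset (List.mem_toFinset.1 hx))
  refine ⟨fun e he => ?_, ?_, ?_⟩
  · rcases mem_union.1 he with he | he
    · exact hM.1 e (mem_sdiff.1 he).1
    · exact (P.notM e (List.mem_toFinset.1 he)).2
  · refine injOn_union_of_disjoint_image (hM.injOn_fst.mono (coe_subset.2 sdiff_subset))
      P.injOn_fst_freeEdges ?_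
    rw [P.image_fst_sdiff_matchedEdges hM, image_fst_freeEdges]
    exact (disjoint_insert_right.2
      ⟨fun h => hs (mem_sdiff.1 h).1, disjoint_sdiff_self_left⟩).mono_right hdropLast
  · refine injOn_union_of_disjoint_image (hM.injOn_snd.mono (coe_subset.2 sdiff_subset))
      P.injOn_snd_freeEdges ?_
    rw [image_sdiff_of_injOn hM.injOn_snd P.matchedEdges_subset, image_snd_matchedEdges,
      image_snd_freeEdges]
    exact disjoint_sdiff_self_left

theorem covered_flip (hM : IsMatching I M) {s s' : I.S} (hhead : P.students.head? = some s)
    (hlast : P.students.getLast? = some s') (hs : s ∉ covered I M) :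
    covered I P.flip = insert s (covered I M) \ {s'} := by
  have htail : P.students.tail.toFinset ⊆ covered I M := by
    rw [← image_fst_matchedEdges]
    exact image_subset_image P.matchedEdges_subset
  rw [covered, flip, image_union, P.image_fst_sdiff_matchedEdges hM, image_fst_freeEdges]
  exact sdiff_union_eq_insert_sdiff hs htail
    (mt List.mem_toFinset.1 (P.nodupS.getLast_notMem_dropLast hlast))
    (by rw [List.insert_toFinset_tail hhead, List.insert_toFinset_dropLast hlast])

end AltPath

theorem altPath_flip_general (I : Inst) (M : Finset (I.S × SeatT I)) (hM : IsMatching I M)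
    (P : AltPath I M) (s s' : I.S)
    (hhead : P.students.head? = some s) (hlast : P.students.getLast? = some s')
    (hs : s ∉ covered I M) :
    IsMatching I (symmDiffM I M P.edges) ∧
    (symmDiffM I M P.edges).card = M.card ∧
    (∀ i, sig I (symmDiffM I M P.edges) i = sig I M i) ∧
    covered I (symmDiffM I M P.edges) = insert s (covered I M) \ {s'} ∧
    (RankMaximal I M → RankMaximal I (symmDiffM I M P.edges)) := by
  rw [P.symmDiffM_edges]
  have hmatch := P.isMatching_flip hM hhead hs
  exact ⟨hmatch, P.card_flip, P.sig_flip, P.covered_flip hM hhead hlast hs,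
    fun h => h.of_sig_eq_s11 hmatch P.card_flip P.sig_flip⟩

/-- flipping an alternating path from an uncovered student `s` to a
covered student `s'` yields a matching `M ⊕ P` of the same size and signature,
covering `(S_M ∪ {s}) \ {s'}`; in particular rank-maximality is preserved. -/
theorem altPath_flip (I : Inst) (M : Finset (I.S × SeatT I)) (hM : IsMatching I M)
    (P : AltPath I M) (s s' : I.S)
    (hhead : P.students.head? = some s) (hlast : P.students.getLast? = some s')
    (hne : P.seats ≠ [])
    (hs : s ∉ covered I M) (hs' : s' ∈ covered I M) :
    IsMatching I (symmDiffM I M P.edges) ∧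
    (symmDiffM I M P.edges).card = M.card ∧
    (∀ i, sig I (symmDiffM I M P.edges) i = sig I M i) ∧
    covered I (symmDiffM I M P.edges) = insert s (covered I M) \ {s'} ∧
    (RankMaximal I M → RankMaximal I (symmDiffM I M P.edges)) :=
  altPath_flip_general I M hM P s s' hhead hlast hs
end
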